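/- arXiv:1108.0258 — 2 statements merged into one kernel-verified Lean document; each statement's English description precedes it below -/
import Mathlib

section
/- Let Γ be a cancellation monoid with neutral element e, A a Γ-graded local ring, and M a finitely generated Γ-graded A-module. Then any two minimal homogeneous generating sets of M have the same (finite) number of elements. -/
/-!
Over a graded local ring, a homogeneous element `a` such that `a * b` is a unit for some
homogeneous `b` of complementary degree is itself a unit: `a` has a homogeneous right inverse
`r`, and `r * a` is an idempotent of the local ring `A₀`, hence `1`.

This makes the Steinitz exchange work for homogeneous generating sets. Let `B` be a minimal and
`G` an arbitrary homogeneous generating set, and `y ∈ B \ G`. Write `y = ∑ c g • g` with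
homogeneous coefficients. If no `c g` with `g ∈ G \ B` is a unit, expanding these `g` in `B`
gives `y ≡ D • y` modulo the span of `B \ {y}`, where `D` is a sum of degree-zero non-units;
then `1 - D` is a unit and `y` is redundant in `B`. So some such `g` can be replaced by `y`,
and repeating this shows `#B ≤ #G`. Finite generation makes minimal generating sets finite.
-/

open DirectSum Submodule

theorem IsLocalRing.eq_zero_or_eq_one_of_isIdempotentElem {R : Type*} [Ring R] [IsLocalRing R]
    {e : R} (he : IsIdempotentElem e) : e = 0 ∨ e = 1 := by
  rcases IsLocalRing.isUnit_or_isUnit_of_add_one (add_sub_cancel e 1) with h | h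
  · exact Or.inr (h.mul_left_cancel (he.trans (mul_one e).symm))
  · refine Or.inl (h.mul_right_cancel ?_)
    rw [zero_mul, mul_sub, mul_one, he.eq, sub_self]

theorem Submodule.finite_of_span_eq_top_of_minimal {R M : Type*} [Semiring R] [AddCommMonoid M]
    [Module R M] [Module.Finite R M] {s : Set M} (hs : span R s = ⊤)
    (hmin : ∀ t ⊂ s, span R t ≠ ⊤) : s.Finite := by
  obtain ⟨t, hts, hst⟩ := (fg_span_iff_fg_span_finset_subset s).1 (hs ▸ Module.Finite.fg_top)
  obtain rfl : (t : Set M) = s := by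
    by_contra hne
    exact hmin _ (hts.ssubset_of_ne hne) (hst ▸ hs)
  exact t.finite_toSet

theorem Submodule.notMem_span_sdiff_singleton_of_minimal {R M : Type*} [Semiring R]
    [AddCommMonoid M] [Module R M] {s : Set M} (hs : span R s = ⊤)
    (hmin : ∀ t ⊂ s, span R t ≠ ⊤) {x : M} (hx : x ∈ s) : x ∉ span R (s \ {x}) := fun h =>
  hmin _ (Set.sdiff_singleton_ssubset.2 hx) <| by
    rwa [← span_insert_eq_span h, Set.insert_sdiff_singleton, Set.insert_eq_of_mem hx]

theorem Submodule.span_insert_erase_eq_top {R M : Type*} [Ring R] [AddCommGroup M] [Module R M]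
    [DecidableEq M] {s : Finset M} (hs : span R (s : Set M) = ⊤) {c : M → R} {x : M}
    (hx : x ∈ s) (hc : IsUnit (c x)) :
    span R (insert (∑ y ∈ s, c y • y) (s.erase x) : Set M) = ⊤ := by
  set P := span R (insert (∑ y ∈ s, c y • y) (s.erase x) : Set M)
  have herase : ∀ y ∈ s.erase x, y ∈ P := fun y hy =>
    subset_span (Set.mem_insert_of_mem _ (Finset.mem_coe.2 hy))
  have hxP : x ∈ P := by
    rw [← smul_mem_iff_of_isUnit P hc,
      eq_sub_of_add_eq (Finset.add_sum_erase s (fun y => c y • y) hx)]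
    exact sub_mem (subset_span (Set.mem_insert _ _))
      (sum_mem fun y hy => smul_mem _ _ (herase y hy))
  refine eq_top_iff.2 (hs ▸ span_le.2 fun y hy => ?_)
  obtain rfl | hyx := eq_or_ne y x
  · exact hxP
  · exact herase y (Finset.mem_erase.2 ⟨hyx, hy⟩)

section GradedRing

variable {ι A : Type*} [DecidableEq ι] [Ring A] (𝒜 : ι → AddSubgroup A)

theorem isUnit_coe_gradeZero_iff [AddMonoid ι] [GradedRing 𝒜] {a : 𝒜 0} :
    IsUnit (a : A) ↔ IsUnit a := by
  refine ⟨fun h => ?_, fun h => h.map (SetLike.GradeZero.subring 𝒜).subtype⟩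
  obtain ⟨b, hab, hba⟩ := isUnit_iff_exists.1 h
  have h1 : (decompose 𝒜 (1 : A) 0 : A) = 1 :=
    decompose_of_mem_same 𝒜 SetLike.GradedOne.one_mem
  refine isUnit_iff_exists.2 ⟨decompose 𝒜 b 0, Subtype.ext ?_, Subtype.ext ?_⟩
  · change (a : A) * _ = 1
    rw [← coe_decompose_mul_of_left_mem_zero 𝒜 a.2, hab, h1]
  · change _ * (a : A) = 1
    rw [← coe_decompose_mul_of_right_mem_zero 𝒜 a.2, hba, h1]

variable [AddRightCancelMonoid ι] [GradedRing 𝒜] [IsLocalRing (𝒜 0)]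

theorem isUnit_of_mul_eq_one_of_mem {a r : A} {i j : ι} (ha : a ∈ 𝒜 i) (hr : r ∈ 𝒜 j)
    (hij : i + j = 0) (h : a * r = 1) : IsUnit a := by
  have hra : r * a ∈ 𝒜 0 := add_eq_zero_comm.1 hij ▸ SetLike.mul_mem_graded hr ha
  have he : IsIdempotentElem (⟨r * a, hra⟩ : 𝒜 0) := by
    refine Subtype.ext ?_
    change r * a * (r * a) = r * a
    rw [mul_assoc, ← mul_assoc a, h, one_mul]
  rcases IsLocalRing.eq_zero_or_eq_one_of_isIdempotentElem he with h0 | h1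
  · have h0 : r * a = 0 := congrArg Subtype.val h0
    refine absurd (Subtype.ext ?_ : (1 : 𝒜 0) = 0) one_ne_zero
    calc (1 : A) = a * r * (a * r) := by rw [h, one_mul]
      _ = a * (r * a) * r := by simp only [mul_assoc]
      _ = 0 := by rw [h0, mul_zero, zero_mul]
  · exact isUnit_iff_exists.2 ⟨r, h, congrArg Subtype.val h1⟩

theorem isUnit_of_isUnit_mul_of_mem {a b : A} {i j : ι} (ha : a ∈ 𝒜 i) (hb : b ∈ 𝒜 j)
    (hij : i + j = 0) (h : IsUnit (a * b)) : IsUnit a := by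
  have hab : a * b ∈ 𝒜 0 := hij ▸ SetLike.mul_mem_graded ha hb
  obtain ⟨u, hu⟩ := (isUnit_coe_gradeZero_iff 𝒜 (a := ⟨a * b, hab⟩)).1 h
  have hbu : b * (u⁻¹ : (𝒜 0)ˣ) ∈ 𝒜 j :=
    add_zero j ▸ SetLike.mul_mem_graded hb (u⁻¹ : (𝒜 0)ˣ).1.2
  refine isUnit_of_mul_eq_one_of_mem 𝒜 ha hbu hij ?_
  have hu' := congrArg Subtype.val u.mul_inv
  rw [hu] at hu'
  rwa [← mul_assoc]

theorem isUnit_one_sub_sum_of_mem_zero {κ : Type*} (s : Finset κ) (t : κ → A)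
    (ht : ∀ k ∈ s, t k ∈ 𝒜 0 ∧ ¬ IsUnit (t k)) : IsUnit (1 - ∑ k ∈ s, t k) := by
  have : Nontrivial A := Subtype.val_injective.nontrivial (α := 𝒜 0)
  obtain ⟨hmem, hnu⟩ : (∑ k ∈ s, t k) ∈ 𝒜 0 ∧ ¬ IsUnit (∑ k ∈ s, t k) := by
    refine Finset.sum_induction _ (fun x => x ∈ 𝒜 0 ∧ ¬ IsUnit x) ?_
      ⟨zero_mem _, not_isUnit_zero⟩ ht
    rintro x y ⟨hx, hxu⟩ ⟨hy, hyu⟩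
    refine ⟨add_mem hx hy, fun hxy => ?_⟩
    refine IsLocalRing.nonunits_add (a := ⟨x, hx⟩) (b := ⟨y, hy⟩)
      (mt (isUnit_coe_gradeZero_iff 𝒜).2 hxu) (mt (isUnit_coe_gradeZero_iff 𝒜).2 hyu) ?_
    exact (isUnit_coe_gradeZero_iff 𝒜).1 hxy
  rcases IsLocalRing.isUnit_or_isUnit_of_add_one (sub_add_cancel (1 : 𝒜 0) ⟨_, hmem⟩) with h | h
  · exact (isUnit_coe_gradeZero_iff 𝒜).2 h
  · exact absurd ((isUnit_coe_gradeZero_iff 𝒜).2 h) hnu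

end GradedRing

section GradedModule

variable {ι A M : Type*} [DecidableEq ι] [AddRightCancelMonoid ι] [Ring A] [AddCommGroup M]
  [Module A M] (𝒜 : ι → AddSubgroup A) [GradedRing 𝒜]
  (ℳ : ι → AddSubgroup M) [SetLike.GradedSMul 𝒜 ℳ] [Decomposition ℳ]

/-- `a = 0` is a separate case since, `ι` being only a monoid, there need not be any `k` with
`k + i = j`. -/
def ShiftsDegree (a : A) (i j : ι) : Prop := a = 0 ∨ ∃ k, a ∈ 𝒜 k ∧ k + i = j

variable {𝒜} in
theorem ShiftsDegree.mul_mem_zero {a b : A} {i j : ι} (ha : ShiftsDegree 𝒜 a i j)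
    (hb : ShiftsDegree 𝒜 b j i) : a * b ∈ 𝒜 0 := by
  rcases ha with rfl | ⟨k, ha, hk⟩
  · rw [zero_mul]; exact zero_mem _
  rcases hb with rfl | ⟨l, hb, hl⟩
  · rw [mul_zero]; exact zero_mem _
  have hkl : k + l = 0 := add_right_cancel (b := j) (by rw [add_assoc, hl, hk, zero_add])
  exact hkl ▸ SetLike.mul_mem_graded ha hb

variable {𝒜} in
theorem ShiftsDegree.isUnit_of_isUnit_mul [IsLocalRing (𝒜 0)] {a b : A} {i j : ι}
    (ha : ShiftsDegree 𝒜 a i j) (hb : ShiftsDegree 𝒜 b j i) (h : IsUnit (a * b)) :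
    IsUnit a := by
  rcases ha with rfl | ⟨k, ha, hk⟩
  · rwa [zero_mul] at h
  rcases hb with rfl | ⟨l, hb, hl⟩
  · rw [mul_zero, isUnit_zero_iff] at h
    have := subsingleton_of_zero_eq_one h
    exact isUnit_of_subsingleton a
  have hkl : k + l = 0 := add_right_cancel (b := j) (by rw [add_assoc, hl, hk, zero_add])
  exact isUnit_of_isUnit_mul_of_mem 𝒜 ha hb hkl h

theorem exists_coe_decompose_smul_eq_smul (a : A) {m : M} {i : ι} (hm : m ∈ ℳ i) (j : ι) :
    ∃ b : A, (decompose ℳ (a • m) j : M) = b • m ∧ ShiftsDegree 𝒜 b i j := by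
  classical
  have hterm : ∀ k, (decompose ℳ ((decompose 𝒜 a k : A) • m) j : M) =
      if k + i = j then (decompose 𝒜 a k : A) • m else 0 := fun k => by
    have hkm : (decompose 𝒜 a k : A) • m ∈ ℳ (k + i) :=
      SetLike.GradedSMul.smul_mem (decompose 𝒜 a k).2 hm
    split_ifs with hk
    · exact decompose_of_mem_same ℳ (hk ▸ hkm)
    · exact decompose_of_mem_ne ℳ hkm hk
  have hsum : (decompose ℳ (a • m) j : M) =
      ∑ k ∈ (decompose 𝒜 a).support, if k + i = j then (decompose 𝒜 a k : A) • m else 0 := by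
    conv_lhs => rw [← sum_support_decompose 𝒜 a, Finset.sum_smul, decompose_sum]
    simp only [DirectSum.sum_apply, AddSubgroup.val_finsetSum, hterm]
  by_cases hk : ∃ k, k + i = j
  · obtain ⟨k, rfl⟩ := hk
    refine ⟨decompose 𝒜 a k, ?_, Or.inr ⟨k, (decompose 𝒜 a k).2, rfl⟩⟩
    simp only [add_left_inj] at hsum
    rw [hsum, Finset.sum_ite_eq']
    split_ifs with hmem
    · rfl
    · rw [DFinsupp.notMem_support_iff.1 hmem, ZeroMemClass.coe_zero, zero_smul]
  · push Not at hk
    refine ⟨0, ?_, Or.inl rfl⟩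
    rw [hsum, zero_smul]
    exact Finset.sum_eq_zero fun k _ => if_neg (hk k)

theorem exists_homogeneous_coeffs (s : Finset M) (d : M → ι) (hs : ∀ x ∈ s, x ∈ ℳ (d x))
    {y : M} {j : ι} (hy : y ∈ ℳ j) (hys : y ∈ span A (s : Set M)) :
    ∃ c : M → A, ∑ x ∈ s, c x • x = y ∧ ∀ x ∈ s, ShiftsDegree 𝒜 (c x) (d x) j := by
  obtain ⟨f, -, rfl⟩ := mem_span_finset.1 hys
  choose! c hc using fun x (hx : x ∈ s) =>
    exists_coe_decompose_smul_eq_smul 𝒜 ℳ (f x) (hs x hx) j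
  refine ⟨c, ?_, fun x hx => (hc x hx).2⟩
  rw [← decompose_of_mem_same ℳ hy, decompose_sum, DirectSum.sum_apply,
    AddSubgroup.val_finsetSum]
  exact Finset.sum_congr rfl fun x hx => (hc x hx).1.symm

end GradedModule

section Exchange

variable {ι A M : Type*} [DecidableEq ι] [AddRightCancelMonoid ι] [Ring A] [AddCommGroup M]
  [Module A M] [DecidableEq M]

theorem exists_exchange_of_irredundant (𝒜 : ι → AddSubgroup A) [GradedRing 𝒜]
    [IsLocalRing (𝒜 0)] (ℳ : ι → AddSubgroup M) [SetLike.GradedSMul 𝒜 ℳ] [Decomposition ℳ]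
    {B G : Finset M} (hB : ∀ x ∈ B, SetLike.IsHomogeneousElem ℳ x)
    (hBspan : span A (B : Set M) = ⊤) (hBirr : ∀ x ∈ B, x ∉ span A ((B : Set M) \ {x}))
    (hG : ∀ x ∈ G, SetLike.IsHomogeneousElem ℳ x) (hGspan : span A (G : Set M) = ⊤)
    {y : M} (hyB : y ∈ B) (hyG : y ∉ G) :
    ∃ s ∈ G \ B, span A (insert y (G.erase s) : Set M) = ⊤ := by
  choose! d hd using fun x (hx : x ∈ G ∪ B) => (Finset.mem_union.1 hx).elim (hG x) (hB x)
  obtain ⟨c, hcy, hc⟩ := exists_homogeneous_coeffs 𝒜 ℳ G d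
    (fun x hx => hd x (Finset.mem_union_left _ hx)) (hd y (Finset.mem_union_right _ hyB))
    (hGspan ▸ mem_top)
  by_contra! hno
  have hcu : ∀ x ∈ G \ B, ¬ IsUnit (c x) := fun x hx hu =>
    hno x hx (hcy ▸ span_insert_erase_eq_top hGspan (Finset.mem_sdiff.1 hx).1 hu)
  set N := span A ((B : Set M) \ {y})
  have hπ : ∀ x ∈ G, ∃ e : A, N.mkQ x = e • N.mkQ y ∧ ShiftsDegree 𝒜 e (d y) (d x) := by
    intro x hx
    obtain ⟨e, hex, he⟩ := exists_homogeneous_coeffs 𝒜 ℳ B d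
      (fun b hb => hd b (Finset.mem_union_right _ hb)) (hd x (Finset.mem_union_left _ hx))
      (hBspan ▸ mem_top)
    refine ⟨e y, ?_, he y hyB⟩
    rw [← hex, map_sum, Finset.sum_eq_single y]
    · exact map_smul _ _ _
    · intro b hb hby
      rw [map_smul, mkQ_apply, (Quotient.mk_eq_zero N).2 (subset_span ⟨hb, hby⟩), smul_zero]
    · exact absurd hyB
  choose! e he using hπ
  have hy : N.mkQ y = (∑ x ∈ G \ B, c x * e x) • N.mkQ y := by
    calc N.mkQ y = ∑ x ∈ G, c x • N.mkQ x := by rw [← hcy, map_sum]; simp only [map_smul]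
      _ = ∑ x ∈ G \ B, c x • N.mkQ x := by
        refine (Finset.sum_subset Finset.sdiff_subset fun x hxG hx => ?_).symm
        have hxB : x ∈ B := by simpa [hxG] using hx
        rw [mkQ_apply, (Quotient.mk_eq_zero N).2 (subset_span ⟨hxB, ?_⟩), smul_zero]
        rintro rfl
        exact hyG hxG
      _ = _ := by
        rw [Finset.sum_smul]
        refine Finset.sum_congr rfl fun x hx => ?_
        rw [(he x (Finset.mem_sdiff.1 hx).1).1, mul_smul]
  have hunit : IsUnit (1 - ∑ x ∈ G \ B, c x * e x) := by
    refine isUnit_one_sub_sum_of_mem_zero 𝒜 _ _ fun x hx => ?_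
    have hxG := (Finset.mem_sdiff.1 hx).1
    exact ⟨(hc x hxG).mul_mem_zero (he x hxG).2,
      fun h => hcu x hx ((hc x hxG).isUnit_of_isUnit_mul (he x hxG).2 h)⟩
  have hy0 : (1 - ∑ x ∈ G \ B, c x * e x) • N.mkQ y = 0 := by
    rw [sub_smul, one_smul, ← hy, sub_self]
  exact hBirr y hyB ((Quotient.mk_eq_zero N).1 (hunit.smul_eq_zero.1 hy0))

theorem card_le_card_of_irredundant (𝒜 : ι → AddSubgroup A) [GradedRing 𝒜]
    [IsLocalRing (𝒜 0)] (ℳ : ι → AddSubgroup M) [SetLike.GradedSMul 𝒜 ℳ] [Decomposition ℳ]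
    {B G : Finset M}
    (hB : ∀ x ∈ B, SetLike.IsHomogeneousElem ℳ x) (hBspan : span A (B : Set M) = ⊤)
    (hBirr : ∀ x ∈ B, x ∉ span A ((B : Set M) \ {x}))
    (hG : ∀ x ∈ G, SetLike.IsHomogeneousElem ℳ x) (hGspan : span A (G : Set M) = ⊤) :
    B.card ≤ G.card := by
  by_cases hBG : B ⊆ G
  · exact Finset.card_le_card hBG
  obtain ⟨y, hyB, hyG⟩ := Finset.not_subset.1 hBG
  obtain ⟨s, hs, hspan⟩ :=
    exists_exchange_of_irredundant 𝒜 ℳ hB hBspan hBirr hG hGspan hyB hyG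
  have hsG := (Finset.mem_sdiff.1 hs).1
  have hG' : ∀ x ∈ insert y (G.erase s), SetLike.IsHomogeneousElem ℳ x := by
    intro x hx
    rcases Finset.mem_insert.1 hx with rfl | hx
    · exact hB x hyB
    · exact hG x (Finset.mem_of_mem_erase hx)
  have hcard : (insert y (G.erase s)).card = G.card := by
    rw [Finset.card_insert_of_notMem fun h => hyG (Finset.mem_of_mem_erase h),
      Finset.card_erase_add_one hsG]
  have hdecr : (insert y (G.erase s) \ B).card < (G \ B).card := by
    rw [Finset.insert_sdiff_of_mem _ hyB, Finset.erase_sdiff_comm]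
    exact Finset.card_erase_lt_of_mem hs
  exact hcard ▸ card_le_card_of_irredundant 𝒜 ℳ hB hBspan hBirr hG' (by exact_mod_cast hspan)
termination_by (G \ B).card

end Exchange

/-- **Theorem 3.4(i).**  Let `Γ` be a cancellation monoid (written additively), `A` a
`Γ`-graded local ring (i.e. the degree-`0` part `A_0` is a local ring in the classical
sense), and `M` a finitely generated `Γ`-graded `A`-module.  Then any two minimal
homogeneous generating sets of `M` are finite and have the same number of elements. -/
theorem minimal_homogeneous_generating_sets_equicardinal
    {Γ : Type*} [AddCancelMonoid Γ] [DecidableEq Γ]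
    {A : Type*} [Ring A] (𝒜 : Γ → AddSubgroup A) [GradedRing 𝒜]
    [IsLocalRing (𝒜 0)]
    {M : Type*} [AddCommGroup M] [Module A M] [Module.Finite A M]
    (ℳ : Γ → AddSubgroup M) [SetLike.GradedSMul 𝒜 ℳ] [DirectSum.Decomposition ℳ]
    (Ω₁ Ω₂ : Set M)
    (hΩ₁hom : ∀ x ∈ Ω₁, x ≠ 0 ∧ ∃ γ : Γ, x ∈ ℳ γ)
    (hΩ₁gen : Submodule.span A Ω₁ = ⊤)
    (hΩ₁min : ∀ S ⊂ Ω₁, Submodule.span A S ≠ ⊤)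
    (hΩ₂hom : ∀ x ∈ Ω₂, x ≠ 0 ∧ ∃ γ : Γ, x ∈ ℳ γ)
    (hΩ₂gen : Submodule.span A Ω₂ = ⊤)
    (hΩ₂min : ∀ S ⊂ Ω₂, Submodule.span A S ≠ ⊤) :
    Ω₁.Finite ∧ Ω₂.Finite ∧ Ω₁.ncard = Ω₂.ncard := by
  classical
  have hfin₁ := finite_of_span_eq_top_of_minimal hΩ₁gen hΩ₁min
  have hfin₂ := finite_of_span_eq_top_of_minimal hΩ₂gen hΩ₂min
  refine ⟨hfin₁, hfin₂, ?_⟩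
  have hirr₁ := fun x => notMem_span_sdiff_singleton_of_minimal hΩ₁gen hΩ₁min (x := x)
  have hirr₂ := fun x => notMem_span_sdiff_singleton_of_minimal hΩ₂gen hΩ₂min (x := x)
  lift Ω₁ to Finset M using hfin₁
  lift Ω₂ to Finset M using hfin₂
  rw [Set.ncard_coe_finset, Set.ncard_coe_finset]
  exact le_antisymm
    (card_le_card_of_irredundant 𝒜 ℳ (fun x hx => (hΩ₁hom x hx).2) hΩ₁gen hirr₁
      (fun x hx => (hΩ₂hom x hx).2) hΩ₂gen)
    (card_le_card_of_irredundant 𝒜 ℳ (fun x hx => (hΩ₂hom x hx).2) hΩ₂gen hirr₂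
      (fun x hx => (hΩ₁hom x hx).2) hΩ₁gen)
end

section
/- Let Γ be a cancellation monoid with neutral element e, A a Γ-graded local ring with maximal graded ideal 𝔐, and L a graded left ideal of A contained in 𝔐. Let M be a finitely generated Γ-graded A-module and H a graded submodule of M. If M = H + LM, then M = H. -/
/-!
Graded Nakayama, one homogeneous generator at a time. Being spanned by homogeneous elements, `𝔐`
is graded, so for `a ∈ 𝔐` the degree-zero component `a₀` lies in `𝔐 ∩ A₀` and `1 - a₀` is a
unit. Let `N` be a graded submodule with `M = N + LM` and `M = N + Ax`, `x` homogeneous of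
degree `j`. Since `𝔐` is two-sided, `l (k + c x) = l k + (l c) x` shows `LM ⊆ N + 𝔐x`, so
`x = k + a x` with `k ∈ N`, `a ∈ 𝔐`; comparing degree-`j` components gives
`(1 - a₀) x = kⱼ ∈ N`, hence `x ∈ N` and `N = M`. Induction over a finite set of homogeneous
generators of `M` then removes them one by one.
-/

section

variable {Γ : Type*} [AddCancelMonoid Γ] [DecidableEq Γ]
variable {A : Type*} [Ring A] (𝒜 : Γ → AddSubgroup A) [GradedRing 𝒜]

/-- The maximal graded ideal of a `Γ`-graded local ring: the two-sided ideal generated by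
all non-invertible homogeneous elements. -/
def maximalGradedIdeal : TwoSidedIdeal A :=
  TwoSidedIdeal.span {a : A | (a ≠ 0 ∧ ∃ γ : Γ, a ∈ 𝒜 γ) ∧ ¬IsUnit a}

end

open DirectSum SetLike

section Homogeneous

variable {ι σ A : Type*} [DecidableEq ι] [AddMonoid ι] [Ring A] [SetLike σ A]
  [AddSubgroupClass σ A] (𝒜 : ι → σ) [GradedRing 𝒜]

theorem TwoSidedIdeal.isHomogeneous_span {s : Set A} (hs : ∀ x ∈ s, IsHomogeneousElem 𝒜 x) :
    IsHomogeneous 𝒜 (TwoSidedIdeal.span s) := by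
  classical
  intro γ x hx
  induction hx using TwoSidedIdeal.span_induction generalizing γ with
  | mem x hx =>
    obtain ⟨i, hi⟩ := hs x hx
    rw [decompose_of_mem 𝒜 hi, coe_of_apply]
    split_ifs
    exacts [TwoSidedIdeal.subset_span hx, zero_mem _]
  | zero => simp
  | add x y _ _ hx hy =>
    rw [decompose_add, DirectSum.add_apply, AddMemClass.coe_add]
    exact add_mem _ (hx γ) (hy γ)
  | neg x _ hx =>
    rw [decompose_neg, DFinsupp.neg_apply, NegMemClass.coe_neg]
    exact neg_mem _ (hx γ)
  | left_absorb a x _ hx =>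
    rw [decompose_mul, coe_mul_apply]
    exact sum_mem fun ij _ ↦ TwoSidedIdeal.mul_mem_left _ _ _ (hx ij.2)
  | right_absorb b x _ hx =>
    rw [decompose_mul, coe_mul_apply]
    exact sum_mem fun ij _ ↦ TwoSidedIdeal.mul_mem_right _ _ _ (hx ij.1)

end Homogeneous

section GradedModule

variable {ι σA σM A M : Type*} [DecidableEq ι] [Semiring A] [AddCommMonoid M] [Module A M]
  [SetLike σA A] [AddSubmonoidClass σA A] [SetLike σM M] [AddSubmonoidClass σM M]
  (𝒜 : ι → σA) (ℳ : ι → σM)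

theorem coe_decompose_smul_add_of_right_mem [AddRightCancelMonoid ι] [GradedRing 𝒜]
    [Decomposition ℳ] [GradedSMul 𝒜 ℳ] (a : A) {x : M} {i j : ι} (hx : x ∈ ℳ j) :
    (decompose ℳ (a • x) (i + j) : M) = (decompose 𝒜 a i : A) • x := by
  induction a using Decomposition.inductionOn 𝒜 with
  | zero => simp
  | @homogeneous k a =>
    have hax : (a : A) • x ∈ ℳ (k + j) := GradedSMul.smul_mem a.2 hx
    rw [decompose_of_mem ℳ hax, decompose_coe, coe_of_apply, coe_of_apply]
    by_cases h : k = i <;> simp [h]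
  | add a b ha hb => simp [add_smul, ha, hb]

variable {ℳ} in
theorem Submodule.IsHomogeneous.sup [Decomposition ℳ] {p q : Submodule A M}
    (hp : p.IsHomogeneous ℳ) (hq : q.IsHomogeneous ℳ) : (p ⊔ q).IsHomogeneous ℳ := by
  intro i x hx
  obtain ⟨y, hy, z, hz, rfl⟩ := Submodule.mem_sup.mp hx
  rw [decompose_add, DirectSum.add_apply, AddMemClass.coe_add]
  exact Submodule.add_mem_sup (hp i hy) (hq i hz)

theorem Submodule.isHomogeneous_span_singleton [AddMonoid ι] [GradedRing 𝒜] [Decomposition ℳ]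
    [GradedSMul 𝒜 ℳ] {x : M} (hx : IsHomogeneousElem ℳ x) : (A ∙ x).IsHomogeneous ℳ := by
  obtain ⟨j, hx⟩ := hx
  intro i y hy
  obtain ⟨a, rfl⟩ := Submodule.mem_span_singleton.mp hy
  clear hy
  induction a using Decomposition.inductionOn 𝒜 with
  | zero => simp
  | @homogeneous k a =>
    rw [decompose_of_mem ℳ (GradedSMul.smul_mem a.2 hx), coe_of_apply]
    split_ifs
    exacts [Submodule.smul_mem _ _ (Submodule.mem_span_singleton_self x), zero_mem _]
  | add a b ha hb =>
    rw [add_smul, decompose_add, DirectSum.add_apply, AddMemClass.coe_add]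
    exact add_mem ha hb

theorem exists_finset_span_eq_top_and_homogeneous [Decomposition ℳ] [Module.Finite A M] :
    ∃ s : Finset M, Submodule.span A (s : Set M) = ⊤ ∧ ∀ x ∈ s, IsHomogeneousElem ℳ x := by
  classical
  obtain ⟨G, hG⟩ := Module.Finite.fg_top (R := A) (M := M)
  let ι₀ := Σ g : G, (decompose ℳ g.1).support
  let x (k : ι₀) : M := decompose ℳ k.1.1 k.2
  refine ⟨Finset.univ.image x, ?_, by simp [x]⟩
  rw [← top_le_iff, ← hG, Submodule.span_le]
  intro g hg
  rw [← sum_support_decompose ℳ g]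
  exact sum_mem fun i hi ↦ Submodule.subset_span (by simpa using ⟨⟨⟨g, hg⟩, i, hi⟩, rfl⟩)

end GradedModule

theorem Submodule.span_smul_le_sup_map_toSpanSingleton {A M : Type*} [Ring A] [AddCommGroup M]
    [Module A M] {I : TwoSidedIdeal A} {L : Set A} (hL : ∀ l ∈ L, l ∈ I) {N : Submodule A M}
    {x : M} (hx : N ⊔ A ∙ x = ⊤) :
    span A {y : M | ∃ l ∈ L, ∃ m : M, y = l • m} ≤
      N ⊔ map (LinearMap.toSpanSingleton A M x) I.asIdeal := by
  rw [span_le]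
  rintro _ ⟨l, hl, m, rfl⟩
  obtain ⟨k, hk, _, hy, rfl⟩ := mem_sup.mp (hx ▸ mem_top : m ∈ N ⊔ A ∙ x)
  obtain ⟨c, rfl⟩ := mem_span_singleton.mp hy
  rw [smul_add, smul_smul]
  exact add_mem_sup (N.smul_mem l hk) ⟨l * c, I.mul_mem_right _ _ (hL l hl), rfl⟩

section MaximalGradedIdeal

variable {Γ A : Type*} [Ring A] {𝒜 : Γ → AddSubgroup A}

theorem isUnit_of_mem_of_notMem_maximalGradedIdeal {a : A} {γ : Γ} (ha : a ∈ 𝒜 γ)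
    (h : a ∉ maximalGradedIdeal 𝒜) : IsUnit a := by
  by_contra hu
  refine h (TwoSidedIdeal.subset_span ⟨⟨fun h0 ↦ h ?_, γ, ha⟩, hu⟩)
  rw [h0]
  exact zero_mem _

variable [DecidableEq Γ] [AddMonoid Γ] [GradedRing 𝒜]

theorem isHomogeneous_maximalGradedIdeal : IsHomogeneous 𝒜 (maximalGradedIdeal 𝒜) :=
  TwoSidedIdeal.isHomogeneous_span 𝒜 fun _ ha ↦ ha.1.2

theorem isUnit_one_sub_of_mem_maximalGradedIdeal (hloc : maximalGradedIdeal 𝒜 ≠ ⊤) {a : A}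
    (ha₀ : a ∈ 𝒜 0) (ha : a ∈ maximalGradedIdeal 𝒜) : IsUnit (1 - a) := by
  refine isUnit_of_mem_of_notMem_maximalGradedIdeal (sub_mem (one_mem_graded 𝒜) ha₀) ?_
  intro h
  refine hloc ((maximalGradedIdeal 𝒜).one_mem_iff.mp ?_)
  simpa using add_mem h ha

end MaximalGradedIdeal

section Nakayama

variable {Γ A M : Type*} [DecidableEq Γ] [AddRightCancelMonoid Γ] [Ring A]
  {𝒜 : Γ → AddSubgroup A} [GradedRing 𝒜] [AddCommGroup M] [Module A M]
  {ℳ : Γ → AddSubgroup M} [Decomposition ℳ] [GradedSMul 𝒜 ℳ]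

theorem mem_of_eq_add_smul_of_mem_maximalGradedIdeal (hloc : maximalGradedIdeal 𝒜 ≠ ⊤)
    {N : Submodule A M} (hN : N.IsHomogeneous ℳ) {x k : M} {a : A} {j : Γ} (hx : x ∈ ℳ j)
    (hk : k ∈ N) (ha : a ∈ maximalGradedIdeal 𝒜) (h : x = k + a • x) : x ∈ N := by
  have hax := coe_decompose_smul_add_of_right_mem 𝒜 ℳ a hx (i := 0)
  rw [zero_add] at hax
  have hj : x = decompose ℳ k j + (decompose 𝒜 a 0 : A) • x :=
    calc x = decompose ℳ (k + a • x) j := by rw [← h, decompose_of_mem_same ℳ hx]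
      _ = decompose ℳ k j + (decompose 𝒜 a 0 : A) • x := by
        rw [decompose_add, DirectSum.add_apply, AddMemClass.coe_add, hax]
  have hunit := isUnit_one_sub_of_mem_maximalGradedIdeal hloc (decompose 𝒜 a 0).2
    (isHomogeneous_maximalGradedIdeal 0 ha)
  rw [← N.smul_mem_iff_of_isUnit hunit, sub_smul, one_smul, sub_eq_of_eq_add hj]
  exact hN j hk

theorem eq_top_of_sup_span_singleton_eq_top (hloc : maximalGradedIdeal 𝒜 ≠ ⊤) {L : Set A}
    (hL : ∀ l ∈ L, l ∈ maximalGradedIdeal 𝒜) {N : Submodule A M} (hN : N.IsHomogeneous ℳ)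
    (hNL : N ⊔ Submodule.span A {y : M | ∃ l ∈ L, ∃ m : M, y = l • m} = ⊤) {x : M}
    (hx : IsHomogeneousElem ℳ x) (hNx : N ⊔ A ∙ x = ⊤) : N = ⊤ := by
  obtain ⟨j, hx⟩ := hx
  have hxmem : x ∈ N ⊔
      Submodule.map (LinearMap.toSpanSingleton A M x) (maximalGradedIdeal 𝒜).asIdeal :=
    sup_le le_sup_left (Submodule.span_smul_le_sup_map_toSpanSingleton hL hNx)
      (hNL ▸ Submodule.mem_top)
  obtain ⟨k, hk, _, ⟨a, ha, rfl⟩, hxk⟩ := Submodule.mem_sup.mp hxmem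
  have hxN := mem_of_eq_add_smul_of_mem_maximalGradedIdeal hloc hN hx hk ha hxk.symm
  rw [eq_top_iff, ← hNx]
  exact sup_le le_rfl ((Submodule.span_singleton_le_iff_mem _ _).mpr hxN)

theorem eq_top_of_sup_span_finset_eq_top (hloc : maximalGradedIdeal 𝒜 ≠ ⊤) {L : Set A}
    (hL : ∀ l ∈ L, l ∈ maximalGradedIdeal 𝒜) (s : Finset M)
    (hs : ∀ x ∈ s, IsHomogeneousElem ℳ x) {N : Submodule A M} (hN : N.IsHomogeneous ℳ)
    (hNL : N ⊔ Submodule.span A {y : M | ∃ l ∈ L, ∃ m : M, y = l • m} = ⊤)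
    (hNs : N ⊔ Submodule.span A s = ⊤) : N = ⊤ := by
  classical
  induction s using Finset.induction_on generalizing N with
  | empty => simpa using hNs
  | insert x s _ ih =>
    have hx := hs x (Finset.mem_insert_self x s)
    refine eq_top_of_sup_span_singleton_eq_top hloc hL hN hNL hx ?_
    refine ih (fun y hy ↦ hs y (Finset.mem_insert_of_mem hy))
      (hN.sup (Submodule.isHomogeneous_span_singleton 𝒜 ℳ hx))
      (top_unique (hNL ▸ sup_le_sup_right le_sup_left _)) ?_
    rwa [sup_assoc, ← Submodule.span_insert, ← Finset.coe_insert]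

end Nakayama

section

variable {Γ : Type*} [AddCancelMonoid Γ] [DecidableEq Γ]
variable {A : Type*} [Ring A] (𝒜 : Γ → AddSubgroup A) [GradedRing 𝒜]

theorem eq_top_of_sup_graded_left_ideal_smul_eq_top
    (hloc : maximalGradedIdeal 𝒜 ≠ ⊤)
    (L : Ideal A)
    (hL𝔐 : ∀ x ∈ L, x ∈ maximalGradedIdeal 𝒜)
    {M : Type*} [AddCommGroup M] [Module A M] [Module.Finite A M]
    (ℳ : Γ → AddSubgroup M) [SetLike.GradedSMul 𝒜 ℳ] [DirectSum.Decomposition ℳ]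
    (H : Submodule A M)
    (hHgraded : ∀ x ∈ H, ∀ γ : Γ, (DirectSum.decompose ℳ x γ : M) ∈ H)
    (hsum : H ⊔ Submodule.span A {x : M | ∃ l ∈ L, ∃ m : M, x = l • m} = ⊤) :
    H = ⊤ := by
  obtain ⟨s, hs_span, hs_hom⟩ := exists_finset_span_eq_top_and_homogeneous (A := A) ℳ
  exact eq_top_of_sup_span_finset_eq_top hloc hL𝔐 s hs_hom (fun γ x hx ↦ hHgraded x hx γ) hsum
    (by rw [hs_span, sup_top_eq])

end
end
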